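/- arXiv:2502.08136 — 2 statements merged into one kernel-verified Lean document; each statement's English description precedes it below -/
import Mathlib

section
/- Let (x_t) be the one-dimensional process x_0 = 0, x_t = w x_{t−1} + ξ_t with ξ_t i.i.d. N(0, σ²) and 0 < w < 1. Then lim_{t→∞} (1/t²) E[(Σ_{i=1}^{t} x_i x_{i−1})² x_t²] = σ⁶ w² / (1 − w²)³. -/
/-!
Write `S t = ∑_{i=1}^t x_i x_{i-1}` and `m a b t = E[S_t^a x_t^b]`. Since
`S_{t+1} = S_t + (w x_t + ξ_{t+1}) x_t` and `x_{t+1} = w x_t + ξ_{t+1}` with `ξ_{t+1}` independent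
of `(S_t, x_t)`, expanding `S_{t+1}^a x_{t+1}^b` and integrating out `ξ_{t+1}` (Gaussian moments
obey `E ξ^(n+2) = (n+1) σ² E ξ^n`) writes `m a b (t+1)` as `w^b m a b t` plus a combination of the
`m i n t` with `i ≤ a`, `(i, n) ≠ (a, b)`. With `m a b t` of order `t^a`, the normalised sequence
`m a b t / t^a` obeys a contracting affine recurrence when `b > 0` and a Cesàro summation when
`b = 0`. Solving these in turn, with `v = σ²/(1-w²)`: `m 0 2 → v`, `m 1 0 / t → w v`,
`m 1 2 / t → w v²`, `m 2 0 / t² → w² v²` and `m 2 2 / t² → w² v³`, where the terms `m 0 4`,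
`m 0 6` and `m 1 4` only need to converge after the same normalisation.
-/

open MeasureTheory ProbabilityTheory Filter Finset Topology Real
open scoped NNReal ENNReal

section Recurrences

lemma tendsto_zero_of_le_mul_add {a ρ : ℕ → ℝ} {q : ℝ} (hq0 : 0 ≤ q) (hq1 : q < 1)
    (ha : ∀ t, 0 ≤ a t) (hρ : Tendsto ρ atTop (𝓝 0))
    (hrec : ∀ᶠ t in atTop, a (t + 1) ≤ q * a t + ρ t) :
    Tendsto a atTop (𝓝 0) := by
  refine tendsto_order.2 ⟨fun ε hε => Eventually.of_forall fun t => hε.trans_le (ha t),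
    fun ε hε => ?_⟩
  have hε2 : 0 < (1 - q) * (ε / 2) := by nlinarith
  obtain ⟨N, hN⟩ := eventually_atTop.1 (hrec.and (hρ.eventually_lt_const hε2))
  -- Past `N`, the excess `a t - ε / 2` contracts by the factor `q` at each step.
  have hgeom : ∀ k, a (N + k) - ε / 2 ≤ q ^ k * (a N - ε / 2) := by
    intro k
    induction k with
    | zero => simp
    | succ k ih =>
      obtain ⟨hstep, hsmall⟩ := hN (N + k) (Nat.le_add_right N k)
      calc a (N + (k + 1)) - ε / 2 ≤ q * (a (N + k) - ε / 2) := by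
            rw [← add_assoc]; nlinarith
        _ ≤ q ^ (k + 1) * (a N - ε / 2) := by
            rw [pow_succ', mul_assoc]; exact mul_le_mul_of_nonneg_left ih hq0
  have hdecay : Tendsto (fun k => q ^ k * (a N - ε / 2)) atTop (𝓝 0) := by
    simpa using (tendsto_pow_atTop_nhds_zero_of_lt_one hq0 hq1).mul_const (a N - ε / 2)
  rw [← map_add_atTop_eq_nat N, eventually_map]
  filter_upwards [hdecay.eventually_lt_const (half_pos hε)] with k hk
  rw [add_comm]
  linarith [hgeom k]

lemma tendsto_of_affine_recurrence {u c b : ℕ → ℝ} {γ β : ℝ} (hγ : |γ| < 1)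
    (hc : Tendsto c atTop (𝓝 γ)) (hb : Tendsto b atTop (𝓝 β))
    (hrec : ∀ᶠ t in atTop, u (t + 1) = c t * u t + b t) :
    Tendsto u atTop (𝓝 (β / (1 - γ))) := by
  set L := β / (1 - γ) with hL
  have hγ1 : 1 - γ ≠ 0 := by linarith [le_abs_self γ]
  -- The error `u t - L` satisfies the same recurrence, forced by `b t + (c t - 1) * L → 0`.
  have hr : Tendsto (fun t => |b t + (c t - 1) * L|) atTop (𝓝 0) := by
    have h := (hb.add ((hc.sub_const 1).mul_const L)).abs
    rwa [show β + (γ - 1) * L = 0 by rw [hL]; field_simp; ring, abs_zero] at h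
  obtain ⟨q, hγq, hq1⟩ := exists_between hγ
  have hcq : ∀ᶠ t in atTop, |c t| ≤ q := hc.abs.eventually_le_const hγq
  have herr := tendsto_zero_of_le_mul_add (a := fun t => |u t - L|) (q := q)
    ((abs_nonneg γ).trans hγq.le) hq1 (fun t => abs_nonneg _) hr ?_
  · simpa using (tendsto_zero_iff_abs_tendsto_zero _).2 herr |>.add_const L
  filter_upwards [hrec, hcq] with t ht hct
  calc |u (t + 1) - L| = |c t * (u t - L) + (b t + (c t - 1) * L)| := by rw [ht]; ring_nf
    _ ≤ |c t| * |u t - L| + |b t + (c t - 1) * L| := by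
        rw [← abs_mul]; exact abs_add_le _ _
    _ ≤ q * |u t - L| + |b t + (c t - 1) * L| := by gcongr

lemma tendsto_div_pow_of_recurrence {u v : ℕ → ℝ} {γ β : ℝ} (a : ℕ) (hγ : |γ| < 1)
    (hv : Tendsto (fun t => v t / (t : ℝ) ^ a) atTop (𝓝 β))
    (hrec : ∀ t, u (t + 1) = γ * u t + v t) :
    Tendsto (fun t => u t / (t : ℝ) ^ a) atTop (𝓝 (β / (1 - γ))) := by
  have hratio : Tendsto (fun t : ℕ => ((t : ℝ) / (t + 1)) ^ a) atTop (𝓝 1) := by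
    simpa using (tendsto_natCast_div_add_atTop (1 : ℝ)).pow a
  refine tendsto_of_affine_recurrence hγ (by simpa using hratio.const_mul γ)
    (by simpa using hv.mul hratio) ?_
  filter_upwards [eventually_ge_atTop 1] with t ht
  have ht0 : (t : ℝ) ≠ 0 := by positivity
  push_cast
  rw [hrec, div_pow]
  field_simp

lemma tendsto_div_of_sum_recurrence {u d : ℕ → ℝ} {δ : ℝ} (h0 : u 0 = 0)
    (hrec : ∀ t, u (t + 1) = u t + d t) (hd : Tendsto d atTop (𝓝 δ)) :
    Tendsto (fun t => u t / t) atTop (𝓝 δ) := by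
  convert hd.cesaro using 2 with t
  rw [← sum_range_induction d u h0 t fun k _ => hrec k, div_eq_inv_mul]

lemma tendsto_div_sq_of_sum_recurrence {u d : ℕ → ℝ} {δ : ℝ} (h0 : u 0 = 0)
    (hrec : ∀ t, u (t + 1) = u t + d t) (hd : Tendsto (fun t => d t / t) atTop (𝓝 δ)) :
    Tendsto (fun t => u t / (t : ℝ) ^ 2) atTop (𝓝 (δ / 2)) := by
  have hsum : ∀ t : ℕ, ∑ i ∈ range t, (i : ℝ) = t * (t - 1) / 2 := fun t => by
    induction t with
    | zero => simp
    | succ t ih => rw [sum_range_succ, ih]; push_cast; ring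
  have hdev : (fun i : ℕ => d i - δ * i) =o[atTop] fun i => (i : ℝ) := by
    refine (Asymptotics.isLittleO_iff_tendsto' ?_).2 ?_
    · filter_upwards [eventually_ne_atTop 0] with i hi h
      exact absurd (Nat.cast_eq_zero.1 h) hi
    · rw [← sub_self δ]
      refine (hd.sub_const δ).congr' ?_
      filter_upwards [eventually_ne_atTop 0] with i hi
      field_simp
  have hsum_dev : (fun t => ∑ i ∈ range t, (d i - δ * i)) =o[atTop] fun t => (t : ℝ) ^ 2 := by
    refine (hdev.sum_range (fun i => Nat.cast_nonneg i) ?_).trans_isBigO ?_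
    · simp_rw [hsum]
      exact (tendsto_natCast_atTop_atTop.atTop_mul_atTop₀
        (tendsto_atTop_add_const_right _ (-1) tendsto_natCast_atTop_atTop)).atTop_div_const
        two_pos
    · refine Asymptotics.IsBigO.of_bound 1 ?_
      filter_upwards [eventually_ge_atTop 1] with t ht
      have ht1 : (1 : ℝ) ≤ t := by exact_mod_cast ht
      rw [hsum, Real.norm_eq_abs, Real.norm_eq_abs, abs_of_nonneg (by positivity),
        abs_of_nonneg (by positivity)]
      nlinarith
  have hmain : Tendsto (fun t : ℕ => δ * (t * (t - 1) / 2) / (t : ℝ) ^ 2) atTop (𝓝 (δ / 2)) := by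
    have h := (tendsto_one_div_atTop_nhds_zero_nat (𝕜 := ℝ)).const_sub 1 |>.const_mul (δ / 2)
    rw [sub_zero, mul_one] at h
    refine h.congr' ?_
    filter_upwards [eventually_ne_atTop 0] with t ht
    field_simp
  convert hsum_dev.tendsto_div_nhds_zero.add hmain using 2 with t
  · rw [← sum_range_induction d u h0 t fun k _ => hrec k, sum_sub_distrib, ← mul_sum, hsum]
    ring
  · ring

lemma abs_pow_lt_one {w : ℝ} (hw : |w| < 1) {n : ℕ} (hn : n ≠ 0) : |w ^ n| < 1 := by
  rw [abs_pow]
  exact pow_lt_one₀ (abs_nonneg w) hw hn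

lemma one_sub_sq_pos {w : ℝ} (hw : |w| < 1) : 0 < 1 - w ^ 2 :=
  sub_pos.2 (by rw [← sq_abs]; exact pow_lt_one₀ (abs_nonneg w) hw two_ne_zero)

end Recurrences

section GaussianMoments

lemma iteratedDeriv_exp_mul_sq_add_two (c : ℝ) (n : ℕ) :
    iteratedDeriv (n + 2) (fun t => exp (c * t ^ 2)) =
      fun t => 2 * c * t * iteratedDeriv (n + 1) (fun t => exp (c * t ^ 2)) t
        + 2 * c * (n + 1) * iteratedDeriv n (fun t => exp (c * t ^ 2)) t := by
  set f : ℝ → ℝ := fun t => exp (c * t ^ 2)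
  have hderiv (k : ℕ) (t : ℝ) :
      HasDerivAt (iteratedDeriv k f) (iteratedDeriv (k + 1) f t) t := by
    have hf : ContDiff ℝ ⊤ f := by fun_prop
    rw [iteratedDeriv_succ]
    exact (hf.differentiable_iteratedDeriv k (WithTop.coe_lt_top _) t).hasDerivAt
  have hweight (t : ℝ) : HasDerivAt (fun t => 2 * c * t) (2 * c) t := by
    simpa using (hasDerivAt_id t).const_mul (2 * c)
  induction n with
  | zero =>
    have hF (t : ℝ) : HasDerivAt f (2 * c * t * f t) t := by
      convert ((hasDerivAt_pow 2 t).const_mul c).exp using 1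
      simp [f]
      ring
    have hf' : deriv f = fun t => 2 * c * t * f t := funext fun t => (hF t).deriv
    funext t
    rw [iteratedDeriv_succ, iteratedDeriv_one, iteratedDeriv_zero]
    conv_lhs => rw [hf']
    rw [((hweight t).fun_mul (hF t)).deriv, hf']
    ring
  | succ n ih =>
    funext t
    rw [iteratedDeriv_succ]
    conv_lhs => rw [ih]
    rw [(((hweight t).fun_mul (hderiv (n + 1) t)).fun_add ((hderiv n t).const_mul _)).deriv]
    push_cast
    ring

lemma integral_pow_add_two_gaussianReal (v : ℝ≥0) (n : ℕ) :
    ∫ y, y ^ (n + 2) ∂gaussianReal 0 v = (n + 1) * v * ∫ y, y ^ n ∂gaussianReal 0 v := by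
  have hmoment (k : ℕ) :
      ∫ y, y ^ k ∂gaussianReal 0 v = iteratedDeriv k (fun t => exp (v / 2 * t ^ 2)) 0 := by
    have h := iteratedDeriv_mgf_zero (X := id) (μ := gaussianReal 0 v)
      (by simp [integrableExpSet_id_gaussianReal]) k
    rw [mgf_id_gaussianReal] at h
    convert h.symm using 2
    · simp
    · funext t
      ring_nf
  rw [hmoment, hmoment, iteratedDeriv_exp_mul_sq_add_two]
  ring

lemma integral_pow_add_two_gaussianReal_sq (σ : ℝ) (n : ℕ) :
    ∫ y, y ^ (n + 2) ∂gaussianReal 0 (σ ^ 2).toNNReal =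
      (n + 1) * σ ^ 2 * ∫ y, y ^ n ∂gaussianReal 0 (σ ^ 2).toNNReal := by
  rw [integral_pow_add_two_gaussianReal, Real.coe_toNNReal _ (sq_nonneg σ)]

end GaussianMoments

def HasFiniteMoments {Ω : Type*} [MeasurableSpace Ω] (μ : Measure Ω) (f : Ω → ℝ) : Prop :=
  ∀ p : ℝ≥0, MemLp f p μ

namespace HasFiniteMoments

variable {Ω : Type*} [MeasurableSpace Ω] {μ : Measure Ω} {f g : Ω → ℝ}

lemma const [IsFiniteMeasure μ] (c : ℝ) : HasFiniteMoments μ fun _ => c :=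
  fun _ => memLp_const c

lemma add (hf : HasFiniteMoments μ f) (hg : HasFiniteMoments μ g) :
    HasFiniteMoments μ (f + g) := fun p => (hf p).add (hg p)

lemma mul (hf : HasFiniteMoments μ f) (hg : HasFiniteMoments μ g) :
    HasFiniteMoments μ (f * g) := fun p => by
  have : ENNReal.HolderTriple (2 * p : ℝ≥0) (2 * p : ℝ≥0) p := ⟨by
    rw [← two_mul, ENNReal.coe_mul, ENNReal.mul_inv (by simp) (by simp), ← mul_assoc,
      ENNReal.coe_ofNat, ENNReal.mul_inv_cancel (by simp) (by simp), one_mul]⟩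
  simpa [mul_comm] using (hf (2 * p)).mul (hg (2 * p))

lemma pow [IsFiniteMeasure μ] (hf : HasFiniteMoments μ f) (n : ℕ) :
    HasFiniteMoments μ (f ^ n) := by
  induction n with
  | zero => exact const 1
  | succ n ih => rw [pow_succ]; exact ih.mul hf

lemma integrable (hf : HasFiniteMoments μ f) : Integrable f μ :=
  memLp_one_iff_integrable.1 (by simpa using hf 1)

end HasFiniteMoments

structure IsGaussianAR1 {Ω : Type*} [MeasurableSpace Ω] (μ : Measure Ω) (σ w : ℝ)
    (ξ x : ℕ → Ω → ℝ) : Prop where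
  measurable_noise : ∀ t, Measurable (ξ t)
  iIndepFun_noise : iIndepFun ξ μ
  map_noise : ∀ t, μ.map (ξ t) = gaussianReal 0 (σ ^ 2).toNNReal
  zero : x 0 = fun _ => 0
  succ : ∀ t, x (t + 1) = fun ω => w * x t ω + ξ (t + 1) ω

def crossSum {Ω : Type*} (x : ℕ → Ω → ℝ) (t : ℕ) (ω : Ω) : ℝ :=
  ∑ i ∈ Icc 1 t, x i ω * x (i - 1) ω

noncomputable def jointMoment {Ω : Type*} [MeasurableSpace Ω] (μ : Measure Ω)
    (x : ℕ → Ω → ℝ) (a b t : ℕ) : ℝ :=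
  ∫ ω, crossSum x t ω ^ a * x t ω ^ b ∂μ

section CrossSum

variable {Ω : Type*} (x : ℕ → Ω → ℝ)

@[simp]
lemma crossSum_zero : crossSum x 0 = 0 := by
  funext ω
  simp [crossSum]

lemma crossSum_succ (t : ℕ) : crossSum x (t + 1) = crossSum x t + x (t + 1) * x t := by
  funext ω
  simp [crossSum, sum_Icc_succ_top (Nat.le_add_left 1 t)]

end CrossSum

-- `s`, `y`, `z` stand for `S_t`, `x_t`, `ξ_{t+1}`, so the left side is `S_{t+1}^a x_{t+1}^b`.
lemma ar1_step_pow_mul_pow_eq_sum (s y z w : ℝ) (a b : ℕ) :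
    (s + (w * y + z) * y) ^ a * (w * y + z) ^ b =
      ∑ m ∈ range (a + 1), ∑ i ∈ range (m + 1), ∑ j ∈ range (b + 1),
        (a.choose m * m.choose i * b.choose j * w ^ (m - i + j) : ℝ) *
          (s ^ i * y ^ (2 * (m - i) + (a - m) + j) * z ^ (a - m + (b - j))) := by
  rw [show s + (w * y + z) * y = (s + w * y ^ 2) + y * z by ring,
    add_pow (s + w * y ^ 2) (y * z), add_pow (w * y) z, sum_mul]
  refine Finset.sum_congr rfl fun m _ => ?_
  rw [add_pow s (w * y ^ 2), sum_mul, sum_mul, sum_mul]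
  refine Finset.sum_congr rfl fun i _ => ?_
  rw [mul_sum]
  refine Finset.sum_congr rfl fun j _ => ?_
  rw [pow_add, pow_add, pow_add, pow_mul]
  ring

namespace IsGaussianAR1

variable {Ω : Type*} [MeasurableSpace Ω] {μ : Measure Ω} {σ w : ℝ} {ξ x : ℕ → Ω → ℝ}

abbrev filtration (h : IsGaussianAR1 μ σ w ξ x) : Filtration ℕ ‹MeasurableSpace Ω› :=
  Filtration.natural ξ fun t => (h.measurable_noise t).stronglyMeasurable

lemma adapted_noise (h : IsGaussianAR1 μ σ w ξ x) : Adapted h.filtration ξ := fun t =>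
  (Filtration.stronglyAdapted_natural (u := ξ) _ t).measurable

lemma adapted (h : IsGaussianAR1 μ σ w ξ x) : Adapted h.filtration x := by
  intro t
  induction t with
  | zero => rw [h.zero]; exact measurable_const
  | succ t ih =>
    rw [h.succ]
    exact ((ih.mono (h.filtration.mono t.le_succ) le_rfl).const_mul w).add (h.adapted_noise _)

lemma adapted_crossSum (h : IsGaussianAR1 μ σ w ξ x) : Adapted h.filtration (crossSum x) :=
  fun t => Finset.measurable_sum _ fun i hi =>
    (h.adapted.measurable_le (mem_Icc.1 hi).2).mul (h.adapted.measurable_le (by grind))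

lemma hasFiniteMoments_noise (h : IsGaussianAR1 μ σ w ξ x) (t : ℕ) :
    HasFiniteMoments μ (ξ t) := fun p => by
  have hp := memLp_id_gaussianReal (μ := 0) (v := (σ ^ 2).toNNReal) p
  rw [← h.map_noise t] at hp
  exact (memLp_map_measure_iff aestronglyMeasurable_id (h.measurable_noise t).aemeasurable).1 hp

lemma hasFiniteMoments [IsFiniteMeasure μ] (h : IsGaussianAR1 μ σ w ξ x) (t : ℕ) :
    HasFiniteMoments μ (x t) := by
  induction t with
  | zero => rw [h.zero]; exact .const 0
  | succ t ih =>
    rw [h.succ]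
    exact ((HasFiniteMoments.const w).mul ih).add (h.hasFiniteMoments_noise _)

lemma hasFiniteMoments_crossSum [IsFiniteMeasure μ] (h : IsGaussianAR1 μ σ w ξ x) (t : ℕ) :
    HasFiniteMoments μ (crossSum x t) := by
  induction t with
  | zero => rw [crossSum_zero]; exact .const 0
  | succ t ih =>
    rw [crossSum_succ]
    exact ih.add ((h.hasFiniteMoments _).mul (h.hasFiniteMoments t))

lemma integral_mul_noise_pow (h : IsGaussianAR1 μ σ w ξ x) {t : ℕ} {F : Ω → ℝ}
    (hF : Measurable[h.filtration t] F) (k : ℕ) :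
    ∫ ω, F ω * ξ (t + 1) ω ^ k ∂μ =
      (∫ ω, F ω ∂μ) * ∫ y, y ^ k ∂gaussianReal 0 (σ ^ 2).toNNReal := by
  have hindep : IndepFun F (ξ (t + 1)) μ := by
    rw [IndepFun_iff_Indep]
    exact indep_of_indep_of_le_left
      (h.iIndepFun_noise.indep_comap_natural_of_lt _ t.lt_succ_self).symm hF.comap_le
  have hindep_pow : IndepFun F (fun ω => ξ (t + 1) ω ^ k) μ :=
    hindep.comp measurable_id (measurable_id.pow_const k)
  rw [hindep_pow.integral_fun_mul_eq_mul_integral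
    (hF.mono (h.filtration.le t) le_rfl).aestronglyMeasurable
    ((h.measurable_noise _).pow_const k).aestronglyMeasurable, ← h.map_noise (t + 1),
    integral_map (h.measurable_noise _).aemeasurable (by fun_prop)]

lemma jointMoment_succ [IsFiniteMeasure μ] (h : IsGaussianAR1 μ σ w ξ x) (a b t : ℕ) :
    jointMoment μ x a b (t + 1) =
      ∑ m ∈ range (a + 1), ∑ i ∈ range (m + 1), ∑ j ∈ range (b + 1),
        (a.choose m * m.choose i * b.choose j * w ^ (m - i + j) : ℝ) *
          (jointMoment μ x i (2 * (m - i) + (a - m) + j) t *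
            ∫ y, y ^ (a - m + (b - j)) ∂gaussianReal 0 (σ ^ 2).toNNReal) := by
  have hint (i n k : ℕ) :
      Integrable (fun ω => crossSum x t ω ^ i * x t ω ^ n * ξ (t + 1) ω ^ k) μ :=
    ((((h.hasFiniteMoments_crossSum t).pow i).mul ((h.hasFiniteMoments t).pow n)).mul
      ((h.hasFiniteMoments_noise _).pow k)).integrable
  have hfactor (i n k : ℕ) :
      ∫ ω, crossSum x t ω ^ i * x t ω ^ n * ξ (t + 1) ω ^ k ∂μ =
        jointMoment μ x i n t * ∫ y, y ^ k ∂gaussianReal 0 (σ ^ 2).toNNReal :=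
    h.integral_mul_noise_pow
      (((h.adapted_crossSum t).pow_const i).mul ((h.adapted t).pow_const n)) k
  have hexpand : (fun ω => crossSum x (t + 1) ω ^ a * x (t + 1) ω ^ b) = fun ω =>
      ∑ m ∈ range (a + 1), ∑ i ∈ range (m + 1), ∑ j ∈ range (b + 1),
        (a.choose m * m.choose i * b.choose j * w ^ (m - i + j) : ℝ) *
          (crossSum x t ω ^ i * x t ω ^ (2 * (m - i) + (a - m) + j) *
            ξ (t + 1) ω ^ (a - m + (b - j))) := by
    funext ω
    rw [crossSum_succ, h.succ]
    exact ar1_step_pow_mul_pow_eq_sum _ _ _ _ a b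
  rw [jointMoment, hexpand, integral_finsetSum _ fun m _ => integrable_finsetSum _ fun i _ =>
    integrable_finsetSum _ fun j _ => (hint _ _ _).const_mul _]
  refine Finset.sum_congr rfl fun m _ => ?_
  rw [integral_finsetSum _ fun i _ => integrable_finsetSum _ fun j _ =>
    (hint _ _ _).const_mul _]
  refine Finset.sum_congr rfl fun i _ => ?_
  rw [integral_finsetSum _ fun j _ => (hint _ _ _).const_mul _]
  refine Finset.sum_congr rfl fun j _ => ?_
  rw [integral_const_mul, hfactor]

section Limits

variable [IsProbabilityMeasure μ]

@[simp]
lemma jointMoment_zero_zero (t : ℕ) : jointMoment μ x 0 0 t = 1 := by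
  simp [jointMoment]

lemma tendsto_jointMoment_zero_two (h : IsGaussianAR1 μ σ w ξ x) (hw : |w| < 1) :
    Tendsto (jointMoment μ x 0 2) atTop (𝓝 (σ ^ 2 / (1 - w ^ 2))) := by
  have hrec (t : ℕ) : jointMoment μ x 0 2 (t + 1) = w ^ 2 * jointMoment μ x 0 2 t + σ ^ 2 := by
    rw [h.jointMoment_succ]
    simp [sum_range_succ, integral_pow_add_two_gaussianReal_sq]
    ring
  exact tendsto_of_affine_recurrence (abs_pow_lt_one hw two_ne_zero) tendsto_const_nhds
    tendsto_const_nhds (.of_forall hrec)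

lemma exists_tendsto_jointMoment_zero_four (h : IsGaussianAR1 μ σ w ξ x) (hw : |w| < 1) :
    ∃ L, Tendsto (jointMoment μ x 0 4) atTop (𝓝 L) := by
  have hrec (t : ℕ) : jointMoment μ x 0 4 (t + 1) = w ^ 4 * jointMoment μ x 0 4 t +
      (6 * w ^ 2 * σ ^ 2 * jointMoment μ x 0 2 t + 3 * σ ^ 4) := by
    rw [h.jointMoment_succ]
    simp [sum_range_succ, integral_pow_add_two_gaussianReal_sq, Nat.choose]
    ring
  have hforcing := ((h.tendsto_jointMoment_zero_two hw).const_mul (6 * w ^ 2 * σ ^ 2)).add_const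
    (3 * σ ^ 4)
  exact ⟨_, tendsto_of_affine_recurrence (abs_pow_lt_one hw four_ne_zero) tendsto_const_nhds
    hforcing (.of_forall hrec)⟩

lemma exists_tendsto_jointMoment_zero_six (h : IsGaussianAR1 μ σ w ξ x) (hw : |w| < 1) :
    ∃ L, Tendsto (jointMoment μ x 0 6) atTop (𝓝 L) := by
  have hrec (t : ℕ) : jointMoment μ x 0 6 (t + 1) = w ^ 6 * jointMoment μ x 0 6 t +
      (15 * w ^ 4 * σ ^ 2 * jointMoment μ x 0 4 t + 45 * w ^ 2 * σ ^ 4 * jointMoment μ x 0 2 t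
        + 15 * σ ^ 6) := by
    rw [h.jointMoment_succ]
    simp [sum_range_succ, integral_pow_add_two_gaussianReal_sq, Nat.choose]
    ring
  obtain ⟨L₄, h₄⟩ := h.exists_tendsto_jointMoment_zero_four hw
  have hforcing := ((h₄.const_mul (15 * w ^ 4 * σ ^ 2)).add
    ((h.tendsto_jointMoment_zero_two hw).const_mul (45 * w ^ 2 * σ ^ 4))).add_const (15 * σ ^ 6)
  exact ⟨_, tendsto_of_affine_recurrence (abs_pow_lt_one hw (by norm_num)) tendsto_const_nhds
    hforcing (.of_forall hrec)⟩

lemma tendsto_jointMoment_one_zero (h : IsGaussianAR1 μ σ w ξ x) (hw : |w| < 1) :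
    Tendsto (fun t => jointMoment μ x 1 0 t / t) atTop (𝓝 (w * σ ^ 2 / (1 - w ^ 2))) := by
  have hrec (t : ℕ) : jointMoment μ x 1 0 (t + 1) =
      jointMoment μ x 1 0 t + w * jointMoment μ x 0 2 t := by
    rw [h.jointMoment_succ]
    simp [sum_range_succ]
    ring
  simpa [mul_div_assoc] using tendsto_div_of_sum_recurrence (by simp [jointMoment]) hrec
    ((h.tendsto_jointMoment_zero_two hw).const_mul w)

lemma tendsto_jointMoment_one_two (h : IsGaussianAR1 μ σ w ξ x) (hw : |w| < 1) :
    Tendsto (fun t => jointMoment μ x 1 2 t / t) atTop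
      (𝓝 (w * σ ^ 4 / (1 - w ^ 2) ^ 2)) := by
  have hrec (t : ℕ) : jointMoment μ x 1 2 (t + 1) = w ^ 2 * jointMoment μ x 1 2 t +
      (σ ^ 2 * jointMoment μ x 1 0 t + 3 * w * σ ^ 2 * jointMoment μ x 0 2 t
        + w ^ 3 * jointMoment μ x 0 4 t) := by
    rw [h.jointMoment_succ]
    simp [sum_range_succ, integral_pow_add_two_gaussianReal_sq, Nat.choose]
    ring
  have ht : Tendsto (fun t : ℕ => (t : ℝ)) atTop atTop := tendsto_natCast_atTop_atTop
  obtain ⟨L₄, h₄⟩ := h.exists_tendsto_jointMoment_zero_four hw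
  have hforcing := (((h.tendsto_jointMoment_one_zero hw).const_mul (σ ^ 2)).add
    (((h.tendsto_jointMoment_zero_two hw).div_atTop ht).const_mul (3 * w * σ ^ 2))).add
    ((h₄.div_atTop ht).const_mul (w ^ 3))
  convert tendsto_div_pow_of_recurrence 1 (abs_pow_lt_one hw two_ne_zero)
    (hforcing.congr fun t => by ring) hrec using 2 with t
  · rw [pow_one]
  · have := (one_sub_sq_pos hw).ne'
    field_simp
    ring

lemma exists_tendsto_jointMoment_one_four (h : IsGaussianAR1 μ σ w ξ x) (hw : |w| < 1) :
    ∃ L, Tendsto (fun t => jointMoment μ x 1 4 t / t) atTop (𝓝 L) := by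
  have hrec (t : ℕ) : jointMoment μ x 1 4 (t + 1) = w ^ 4 * jointMoment μ x 1 4 t +
      (6 * w ^ 2 * σ ^ 2 * jointMoment μ x 1 2 t + 3 * σ ^ 4 * jointMoment μ x 1 0 t
        + 15 * w * σ ^ 4 * jointMoment μ x 0 2 t + 10 * w ^ 3 * σ ^ 2 * jointMoment μ x 0 4 t
        + w ^ 5 * jointMoment μ x 0 6 t) := by
    rw [h.jointMoment_succ]
    simp [sum_range_succ, integral_pow_add_two_gaussianReal_sq, Nat.choose]
    ring
  have ht : Tendsto (fun t : ℕ => (t : ℝ)) atTop atTop := tendsto_natCast_atTop_atTop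
  obtain ⟨L₄, h₄⟩ := h.exists_tendsto_jointMoment_zero_four hw
  obtain ⟨L₆, h₆⟩ := h.exists_tendsto_jointMoment_zero_six hw
  have hforcing := (((((h.tendsto_jointMoment_one_two hw).const_mul (6 * w ^ 2 * σ ^ 2)).add
    ((h.tendsto_jointMoment_one_zero hw).const_mul (3 * σ ^ 4))).add
    (((h.tendsto_jointMoment_zero_two hw).div_atTop ht).const_mul (15 * w * σ ^ 4))).add
    ((h₄.div_atTop ht).const_mul (10 * w ^ 3 * σ ^ 2))).add
    ((h₆.div_atTop ht).const_mul (w ^ 5))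
  have hlim := tendsto_div_pow_of_recurrence 1 (abs_pow_lt_one hw four_ne_zero)
    (hforcing.congr fun t => by ring) hrec
  exact ⟨_, by simpa using hlim⟩

lemma tendsto_jointMoment_two_zero (h : IsGaussianAR1 μ σ w ξ x) (hw : |w| < 1) :
    Tendsto (fun t => jointMoment μ x 2 0 t / (t : ℝ) ^ 2) atTop
      (𝓝 (w ^ 2 * σ ^ 4 / (1 - w ^ 2) ^ 2)) := by
  have hrec (t : ℕ) : jointMoment μ x 2 0 (t + 1) = jointMoment μ x 2 0 t +
      (2 * w * jointMoment μ x 1 2 t + σ ^ 2 * jointMoment μ x 0 2 t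
        + w ^ 2 * jointMoment μ x 0 4 t) := by
    rw [h.jointMoment_succ]
    simp [sum_range_succ, integral_pow_add_two_gaussianReal_sq, Nat.choose]
    ring
  have ht : Tendsto (fun t : ℕ => (t : ℝ)) atTop atTop := tendsto_natCast_atTop_atTop
  obtain ⟨L₄, h₄⟩ := h.exists_tendsto_jointMoment_zero_four hw
  have hforcing := (((h.tendsto_jointMoment_one_two hw).const_mul (2 * w)).add
    (((h.tendsto_jointMoment_zero_two hw).div_atTop ht).const_mul (σ ^ 2))).add
    ((h₄.div_atTop ht).const_mul (w ^ 2))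
  convert tendsto_div_sq_of_sum_recurrence (by simp [jointMoment]) hrec
    (hforcing.congr fun t => by ring) using 2
  have := (one_sub_sq_pos hw).ne'
  field_simp
  ring

lemma tendsto_jointMoment_two_two (h : IsGaussianAR1 μ σ w ξ x) (hw : |w| < 1) :
    Tendsto (fun t => jointMoment μ x 2 2 t / (t : ℝ) ^ 2) atTop
      (𝓝 (w ^ 2 * σ ^ 6 / (1 - w ^ 2) ^ 3)) := by
  have hrec (t : ℕ) : jointMoment μ x 2 2 (t + 1) = w ^ 2 * jointMoment μ x 2 2 t +
      (σ ^ 2 * jointMoment μ x 2 0 t + 6 * w * σ ^ 2 * jointMoment μ x 1 2 t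
        + 2 * w ^ 3 * jointMoment μ x 1 4 t + 3 * σ ^ 4 * jointMoment μ x 0 2 t
        + 6 * w ^ 2 * σ ^ 2 * jointMoment μ x 0 4 t + w ^ 4 * jointMoment μ x 0 6 t) := by
    rw [h.jointMoment_succ]
    simp [sum_range_succ, integral_pow_add_two_gaussianReal_sq, Nat.choose]
    ring
  have ht : Tendsto (fun t : ℕ => (t : ℝ) ^ 2) atTop atTop :=
    (tendsto_pow_atTop two_ne_zero).comp tendsto_natCast_atTop_atTop
  have ht' : Tendsto (fun t : ℕ => (t : ℝ)) atTop atTop := tendsto_natCast_atTop_atTop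
  obtain ⟨L₄, h₄⟩ := h.exists_tendsto_jointMoment_zero_four hw
  obtain ⟨L₆, h₆⟩ := h.exists_tendsto_jointMoment_zero_six hw
  obtain ⟨L₁₄, h₁₄⟩ := h.exists_tendsto_jointMoment_one_four hw
  have hforcing := (((((h.tendsto_jointMoment_two_zero hw).const_mul (σ ^ 2)).add
    (((h.tendsto_jointMoment_one_two hw).div_atTop ht').const_mul (6 * w * σ ^ 2))).add
    ((h₁₄.div_atTop ht').const_mul (2 * w ^ 3))).add
    (((h.tendsto_jointMoment_zero_two hw).div_atTop ht).const_mul (3 * σ ^ 4))).add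
    ((h₄.div_atTop ht).const_mul (6 * w ^ 2 * σ ^ 2)) |>.add
    ((h₆.div_atTop ht).const_mul (w ^ 4))
  convert tendsto_div_pow_of_recurrence 2 (abs_pow_lt_one hw two_ne_zero)
    (hforcing.congr fun t => by ring) hrec using 2
  have := (one_sub_sq_pos hw).ne'
  field_simp
  ring

end Limits

end IsGaussianAR1

theorem ar1_sixth_moment_cross_limit_general {Ω : Type*} [MeasurableSpace Ω]
    (μ : Measure Ω) [IsProbabilityMeasure μ]
    (σ w : ℝ) (hw0 : 0 < w) (hw1 : w < 1)
    (ξ : ℕ → Ω → ℝ)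
    (hmeas : ∀ t, Measurable (ξ t))
    (hindep : iIndepFun ξ μ)
    (hgauss : ∀ t, Measure.map (ξ t) μ = gaussianReal 0 (Real.toNNReal (σ ^ 2)))
    (x : ℕ → Ω → ℝ)
    (hx0 : x 0 = fun _ => 0)
    (hrec : ∀ t, x (t + 1) = fun ω => w * x t ω + ξ (t + 1) ω) :
    Tendsto
      (fun t : ℕ =>
        (1 / (t : ℝ) ^ 2) *
          ∫ ω, (∑ i ∈ Icc 1 t, x i ω * x (i - 1) ω) ^ 2 * (x t ω) ^ 2 ∂μ)
      atTop (nhds (σ ^ 6 * w ^ 2 / (1 - w ^ 2) ^ 3)) := by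
  have h : IsGaussianAR1 μ σ w ξ x := ⟨hmeas, hindep, hgauss, hx0, hrec⟩
  convert h.tendsto_jointMoment_two_two (abs_lt.2 ⟨by linarith, hw1⟩) using 2 with t
  · rw [one_div_mul_eq_div]
    rfl
  · ring

/-- Sixth-moment limit for the 1D Gaussian AR(1) process:
`(1/t²) E[(∑_{i=1}^t x_i x_{i-1})² x_t²] → σ⁶ w² / (1-w²)³`. -/
theorem ar1_sixth_moment_cross_limit {Ω : Type*} [MeasurableSpace Ω]
    (μ : Measure Ω) [IsProbabilityMeasure μ]
    (σ w : ℝ) (hσ : 0 < σ) (hw0 : 0 < w) (hw1 : w < 1)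
    (ξ : ℕ → Ω → ℝ)
    (hmeas : ∀ t, Measurable (ξ t))
    (hindep : iIndepFun ξ μ)
    (hgauss : ∀ t, Measure.map (ξ t) μ = gaussianReal 0 (Real.toNNReal (σ ^ 2)))
    (x : ℕ → Ω → ℝ)
    (hx0 : x 0 = fun _ => 0)
    (hrec : ∀ t, x (t + 1) = fun ω => w * x t ω + ξ (t + 1) ω) :
    Tendsto
      (fun t : ℕ =>
        (1 / (t : ℝ) ^ 2) *
          ∫ ω, (∑ i ∈ Icc 1 t, x i ω * x (i - 1) ω) ^ 2 * (x t ω) ^ 2 ∂μ)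
      atTop (nhds (σ ^ 6 * w ^ 2 / (1 - w ^ 2) ^ 3)) :=
  ar1_sixth_moment_cross_limit_general μ σ w hw0 hw1 ξ hmeas hindep hgauss x hx0 hrec
end

section
/- Define ℓ(α₁, α₂; w) = (σ²/(1 − w²)) · ((σ²/(1 − w²))(w α₁ + α₂) − w)² for real α₁, α₂ and w ∈ [w_min, w_max] ⊂ (0,1) with w_min < w_max. Then inf over (α₁, α₂) ∈ ℝ² of sup over w ∈ [w_min, w_max] of ℓ(α₁, α₂; w) is strictly positive. -/
private lemma combo_aux (d r e₁ e₂ e₃ : ℝ) (hd : 0 < d)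
    (hid : -(d/2)*e₁ + d*e₂ - (d/2)*e₃ = -(2*d*r))
    (h1 : e₁ < r) (h2 : -r < e₂) (h3 : e₃ < r) : False := by
  have k1 : 0 < d * (r - e₁) := mul_pos hd (by linarith)
  have k2 : 0 < d * (e₂ + r) := mul_pos hd (by linarith)
  have k3 : 0 < d * (r - e₃) := mul_pos hd (by linarith)
  nlinarith [k1, k2, k3]

private lemma pointval_aux (σ w s r : ℝ) (hσ : 0 < σ) (hw0 : 0 < w) (hw1 : w < 1)
    (hr : 0 ≤ r) (he : r ≤ |s - w*(1-w^2)/σ^2|) :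
    σ^6 * r^2 ≤ (σ^2/(1-w^2)) * ((σ^2/(1-w^2))*s - w)^2 := by
  have h1 : 0 < 1 - w^2 := by nlinarith
  have hσ2 : (0:ℝ) < σ^2 := by positivity
  have hA0 : 0 < σ^2/(1-w^2) := div_pos hσ2 h1
  have hA : σ^2 ≤ σ^2/(1-w^2) := by
    rw [le_div_iff₀ h1]; nlinarith
  have key : (σ^2/(1-w^2))*s - w = (σ^2/(1-w^2)) * (s - w*(1-w^2)/σ^2) := by
    field_simp
  rw [key, mul_pow, ← mul_assoc]
  have h2 : r^2 ≤ (s - w*(1-w^2)/σ^2)^2 := by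
    have h3 := sq_abs (s - w*(1-w^2)/σ^2)
    nlinarith [abs_nonneg (s - w*(1-w^2)/σ^2)]
  have h3 : σ^6 ≤ (σ^2/(1-w^2)) * (σ^2/(1-w^2))^2 := by
    calc σ^6 = (σ^2)^3 := by ring
      _ ≤ (σ^2/(1-w^2))^3 := pow_le_pow_left₀ (by positivity) hA 3
      _ = _ := by ring
  calc σ^6 * r^2 ≤ ((σ^2/(1-w^2)) * (σ^2/(1-w^2))^2) * (s - w*(1-w^2)/σ^2)^2 :=
        mul_le_mul h3 h2 (by positivity) (by positivity)
    _ = _ := by ring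

/-- The limiting in-context test loss of a single-layer linear attention model has a
strictly positive min-max value over the task interval `[w_min, w_max]`. -/
theorem limiting_loss_lower_bound (σ wmin wmax : ℝ)
    (hσ : 0 < σ) (h0 : 0 < wmin) (h1 : wmin < wmax) (h2 : wmax < 1) :
    0 < ⨅ p : ℝ × ℝ, ⨆ w : Set.Icc wmin wmax,
        (σ ^ 2 / (1 - (w : ℝ) ^ 2)) *
          ((σ ^ 2 / (1 - (w : ℝ) ^ 2)) * ((w : ℝ) * p.1 + p.2) - (w : ℝ)) ^ 2 := by
  set a := wmin
  set b := wmax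
  set r : ℝ := 3*(b-a)^2*(a+b)/(16*σ^2) with hrdef
  have hd0 : 0 < b - a := by linarith
  have hab0 : 0 < a + b := by linarith
  have hrpos : 0 < r :=
    div_pos (mul_pos (mul_pos (by norm_num) (pow_pos hd0 2)) hab0) (by positivity)
  refine lt_of_lt_of_le (show (0:ℝ) < σ^6 * r^2 by positivity) (le_ciInf fun p => ?_)
  -- Boundedness of the sup
  have hcont : ContinuousOn (fun w : ℝ =>
      (σ ^ 2 / (1 - w ^ 2)) *
        ((σ ^ 2 / (1 - w ^ 2)) * (w * p.1 + p.2) - w) ^ 2) (Set.Icc a b) := by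
    have hne : ∀ w ∈ Set.Icc a b, 1 - w^2 ≠ 0 := by
      intro w hw
      have := hw.1; have := hw.2
      nlinarith
    have hc1 : ContinuousOn (fun w : ℝ => σ^2/(1-w^2)) (Set.Icc a b) :=
      ContinuousOn.div continuousOn_const (by fun_prop) hne
    exact hc1.mul (((hc1.mul (by fun_prop)).sub continuousOn_id).pow 2)
  have hbdd : BddAbove (Set.range fun w : Set.Icc a b =>
      (σ ^ 2 / (1 - (w:ℝ) ^ 2)) *
        ((σ ^ 2 / (1 - (w:ℝ) ^ 2)) * ((w:ℝ) * p.1 + p.2) - (w:ℝ)) ^ 2) := by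
    have hb := (isCompact_Icc.image_of_continuousOn hcont).bddAbove
    have hrange : (Set.range fun w : Set.Icc a b =>
        (σ ^ 2 / (1 - (w:ℝ) ^ 2)) *
          ((σ ^ 2 / (1 - (w:ℝ) ^ 2)) * ((w:ℝ) * p.1 + p.2) - (w:ℝ)) ^ 2)
        = (fun w : ℝ => (σ ^ 2 / (1 - w ^ 2)) *
          ((σ ^ 2 / (1 - w ^ 2)) * (w * p.1 + p.2) - w) ^ 2) '' Set.Icc a b := by
      ext y
      constructor
      · rintro ⟨⟨w, hw⟩, rfl⟩; exact ⟨w, hw, rfl⟩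
      · rintro ⟨w, hw, rfl⟩; exact ⟨⟨w, hw⟩, rfl⟩
    rwa [hrange]
  -- the three test points
  set m : ℝ := (a+b)/2 with hmdef
  set t : ℝ → ℝ := fun w => w*(1-w^2)/σ^2 with htdef
  have hwit : (r ≤ |(a*p.1+p.2) - t a|) ∨ (r ≤ |(m*p.1+p.2) - t m|) ∨ (r ≤ |(b*p.1+p.2) - t b|) := by
    by_contra hcon
    push_neg at hcon
    obtain ⟨c1, c2, c3⟩ := hcon
    rw [abs_lt] at c1 c2 c3
    have hd : 0 < b - a := by linarith
    have hid : -((b-a)/2)*((a*p.1+p.2) - t a) + (b-a)*((m*p.1+p.2) - t m)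
        - ((b-a)/2)*((b*p.1+p.2) - t b) = -(2*(b-a)*r) := by
      simp only [htdef, hmdef, hrdef]
      field_simp
      ring
    exact combo_aux (b-a) r ((a*p.1+p.2) - t a) ((m*p.1+p.2) - t m) ((b*p.1+p.2) - t b)
      hd hid c1.2 c2.1 c3.2
  have key : ∀ w : ℝ, 0 < w → w < 1 → r ≤ |(w*p.1+p.2) - t w| →
      w ∈ Set.Icc a b →
      σ^6 * r^2 ≤ ⨆ w : Set.Icc a b,
        (σ ^ 2 / (1 - (w:ℝ) ^ 2)) *
          ((σ ^ 2 / (1 - (w:ℝ) ^ 2)) * ((w:ℝ) * p.1 + p.2) - (w:ℝ)) ^ 2 := by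
    intro w hw0 hw1 habs hmem
    refine le_ciSup_of_le hbdd ⟨w, hmem⟩ ?_
    exact pointval_aux σ w (w*p.1+p.2) r hσ hw0 hw1 hrpos.le habs
  rcases hwit with h | h | h
  · exact key a h0 (by linarith) h (Set.left_mem_Icc.2 (by linarith))
  · exact key m (by simp only [hmdef]; linarith) (by simp only [hmdef]; linarith) h
      ⟨by simp only [hmdef]; linarith, by simp only [hmdef]; linarith⟩
  · exact key b (by linarith) h2 h (Set.right_mem_Icc.2 (by linarith))
end
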